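/- arXiv:1401.2823 — 5 statements merged into one kernel-verified Lean document; each statement's English description precedes it below -/
import Mathlib

section
/- For every h > 0, ∫₀^∞ u·J₀(u·h)/(1 + u²)² du = (h/2)·K₁(h). Consequently, for η1 = 2 the two-dimensional Spartan covariance C(h) = (η0/2π)·∫₀^∞ u·J₀(u·h)/(1 + 2u² + u⁴) du equals η0·h·K₁(h)/(4π) for every amplitude η0 > 0. -/
open MeasureTheory Real

/-- Bessel function of the first kind of order zero,
`J₀(x) = (1/π) ∫₀^π cos (x sin θ) dθ`. -/
noncomputable def besselJ0 (x : ℝ) : ℝ :=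
  (1 / Real.pi) * ∫ θ in (0:ℝ)..Real.pi, Real.cos (x * Real.sin θ)

/-- Modified Bessel function of the second kind of order `p` (for `x > 0`),
`K_p(x) = ∫₀^∞ exp (−x cosh t) cosh (p t) dt`. -/
noncomputable def besselK (p x : ℝ) : ℝ :=
  ∫ t in Set.Ioi (0:ℝ), Real.exp (-x * Real.cosh t) * Real.cosh (p * t)

/-!
Writing `1 / (1 + u²)² = ∫₀^∞ s e^{-(1+u²)s} ds` and exchanging the order of integration (the
integrand is dominated because `|J₀| ≤ 1`), the inner `u`-integral is the Hankel transform of a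
Gaussian, `∫₀^∞ u J₀(uh) e^{-su²} du = e^{-h²/(4s)} / (2s)`, obtained by integrating the power
series of `J₀` termwise against the Gaussian moments. What remains is
`½ ∫₀^∞ e^{-s - h²/(4s)} ds`, and the substitution `s = (h/2) eᵗ` turns it into
`(h/2) ∫_ℝ e^{-h cosh t} eᵗ dt = h K₁(h)`.
-/

open Set Finset

lemma continuous_besselJ0 : Continuous besselJ0 :=
  continuous_const.mul <| intervalIntegral.continuous_parametric_intervalIntegral_of_continuous'
    (f := fun x θ => cos (x * sin θ)) (by fun_prop) 0 π

lemma abs_besselJ0_le_one (x : ℝ) : |besselJ0 x| ≤ 1 := by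
  have hint : ‖∫ θ in (0:ℝ)..π, cos (x * sin θ)‖ ≤ 1 * |π - 0| :=
    intervalIntegral.norm_integral_le_of_norm_le_const fun θ _ => abs_cos_le_one _
  rw [Real.norm_eq_abs, sub_zero, abs_of_pos pi_pos] at hint
  rw [besselJ0, abs_mul, abs_of_pos (one_div_pos.2 pi_pos)]
  calc 1 / π * |∫ θ in (0:ℝ)..π, cos (x * sin θ)| ≤ 1 / π * (1 * π) := by gcongr
    _ = 1 := by field_simp

lemma integral_sin_pow_two_mul (k : ℕ) :
    ∫ θ in (0:ℝ)..π, sin θ ^ (2 * k) = π * (2 * k).factorial / (4 ^ k * (k.factorial : ℝ) ^ 2) := by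
  rw [integral_sin_pow_even, mul_div_assoc]
  congr 1
  induction k with
  | zero => simp
  | succ k ih =>
    rw [prod_range_succ, ih, show 2 * (k + 1) = 2 * k + 1 + 1 by ring, Nat.factorial_succ,
      Nat.factorial_succ, Nat.factorial_succ]
    push_cast
    field_simp
    ring

lemma hasSum_besselJ0 (x : ℝ) :
    HasSum (fun k : ℕ => (-(x ^ 2 / 4)) ^ k / (k.factorial : ℝ) ^ 2) (besselJ0 x) := by
  have hterm (k : ℕ) : 1 / π * ∫ θ in (0:ℝ)..π, (-1) ^ k * (x * sin θ) ^ (2 * k) / (2 * k).factorial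
      = (-(x ^ 2 / 4)) ^ k / (k.factorial : ℝ) ^ 2 := by
    have hfun : (fun θ => (-1) ^ k * (x * sin θ) ^ (2 * k) / (2 * k).factorial)
        = fun θ => (-1) ^ k * x ^ (2 * k) / (2 * k).factorial * sin θ ^ (2 * k) := by
      ext θ; ring
    rw [hfun, intervalIntegral.integral_const_mul, integral_sin_pow_two_mul, neg_pow (x ^ 2 / 4),
      div_pow, pow_mul]
    field_simp
  have hcos : HasSum (fun k : ℕ => ∫ θ in (0:ℝ)..π,
      (-1) ^ k * (x * sin θ) ^ (2 * k) / (2 * k).factorial) (∫ θ in (0:ℝ)..π, cos (x * sin θ)) := by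
    refine intervalIntegral.hasSum_integral_of_dominated_convergence
      (fun k _ => |x| ^ (2 * k) / (2 * k).factorial)
      (fun k => Continuous.aestronglyMeasurable (by fun_prop))
      (fun k => .of_forall fun θ _ => ?_) (.of_forall fun _ _ => ?_) intervalIntegrable_const
      (.of_forall fun θ _ => hasSum_cos _)
    · rw [norm_div, norm_mul, norm_pow, norm_pow, norm_neg, norm_one, one_pow, one_mul,
        Real.norm_natCast, norm_mul, Real.norm_eq_abs, Real.norm_eq_abs]
      gcongr
      exact mul_le_of_le_one_right (abs_nonneg x) (abs_sin_le_one θ)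
    · exact (summable_pow_div_factorial |x|).comp_injective fun a b hab => by simpa using hab
  simpa only [besselJ0, hterm] using hcos.mul_left (1 / π)

lemma integral_pow_mul_exp_neg_mul_Ioi (n : ℕ) {c : ℝ} (hc : 0 < c) :
    ∫ s in Ioi (0:ℝ), s ^ n * exp (-(c * s)) = n.factorial / c ^ (n + 1) := by
  have h := integral_rpow_mul_exp_neg_mul_Ioi (a := n + 1) (by positivity) hc
  simp only [add_sub_cancel_right, rpow_natCast, Gamma_nat_eq_factorial] at h
  rw [h, ← Nat.cast_succ, rpow_natCast, one_div_pow, one_div_mul_eq_div]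

lemma integral_pow_mul_exp_neg_mul_sq_Ioi (k : ℕ) {s : ℝ} (hs : 0 < s) :
    ∫ u in Ioi (0:ℝ), u ^ (2 * k + 1) * exp (-(s * u ^ 2)) = k.factorial / (2 * s ^ (k + 1)) := by
  have h := integral_rpow_mul_exp_neg_mul_rpow (p := 2) (q := (2 * k + 1 : ℕ)) (by norm_num)
    (by linarith [(Nat.cast_nonneg _ : (0:ℝ) ≤ (2 * k + 1 : ℕ))]) hs
  have hexp : ((2 * k + 1 : ℕ) + 1 : ℝ) / 2 = k + 1 := by push_cast; ring
  simp only [rpow_natCast, rpow_two, neg_mul, neg_div, hexp, Gamma_nat_eq_factorial] at h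
  rw [h, rpow_neg hs.le, ← Nat.cast_succ, rpow_natCast]
  field_simp

lemma integral_mul_exp_neg_mul_Ioi {c : ℝ} (hc : 0 < c) :
    ∫ s in Ioi (0:ℝ), s * exp (-(c * s)) = 1 / c ^ 2 := by
  simpa using integral_pow_mul_exp_neg_mul_Ioi 1 hc

lemma integral_mul_besselJ0_mul_exp_neg_mul_sq (h : ℝ) {s : ℝ} (hs : 0 < s) :
    ∫ u in Ioi (0:ℝ), u * besselJ0 (u * h) * exp (-(s * u ^ 2))
      = exp (-(h ^ 2 / (4 * s))) / (2 * s) := by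
  set a : ℕ → ℝ := fun k => (-(h ^ 2 / 4)) ^ k / (k.factorial : ℝ) ^ 2
  set M : ℕ → ℝ → ℝ := fun k u => u ^ (2 * k + 1) * exp (-(s * u ^ 2))
  set b : ℕ → ℝ := fun k => (-(h ^ 2 / (4 * s))) ^ k / k.factorial * (1 / (2 * s))
  have hM (k : ℕ) : ∫ u in Ioi (0:ℝ), M k u = k.factorial / (2 * s ^ (k + 1)) :=
    integral_pow_mul_exp_neg_mul_sq_Ioi k hs
  have hMint (k : ℕ) : IntegrableOn (M k) (Ioi 0) :=
    Integrable.of_integral_ne_zero <| by rw [hM]; positivity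
  have hab (k : ℕ) : a k * (k.factorial / (2 * s ^ (k + 1))) = b k := by
    simp only [a, b]
    rw [show -(h ^ 2 / (4 * s)) = -(h ^ 2 / 4) / s by ring, div_pow, pow_succ]
    field_simp
    ring
  have hnorm (k : ℕ) : ∫ u in Ioi (0:ℝ), ‖a k * M k u‖ = |b k| := by
    have hnorm_eq : ∀ u ∈ Ioi (0:ℝ), ‖a k * M k u‖ = |a k| * M k u := fun u (hu : 0 < u) => by
      rw [norm_mul, Real.norm_eq_abs, Real.norm_of_nonneg (by positivity)]
    rw [setIntegral_congr_fun measurableSet_Ioi hnorm_eq, integral_const_mul, hM, ← hab, abs_mul,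
      abs_of_pos (show (0:ℝ) < k.factorial / (2 * s ^ (k + 1)) by positivity)]
  have hseries (u : ℝ) :
      HasSum (fun k => a k * M k u) (u * besselJ0 (u * h) * exp (-(s * u ^ 2))) := by
    have hJ := (hasSum_besselJ0 (u * h)).mul_right (u * exp (-(s * u ^ 2)))
    rw [show besselJ0 (u * h) * (u * exp (-(s * u ^ 2)))
      = u * besselJ0 (u * h) * exp (-(s * u ^ 2)) by ring] at hJ
    refine (funext fun k => ?_ : (fun k => a k * M k u) = _) ▸ hJ
    rw [show -((u * h) ^ 2 / 4) = u ^ 2 * -(h ^ 2 / 4) by ring, mul_pow, ← pow_mul]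
    ring
  have hexp : HasSum b (exp (-(h ^ 2 / (4 * s))) / (2 * s)) := by
    simpa only [← Real.exp_eq_exp_ℝ, b, mul_one_div] using
      (NormedSpace.expSeries_div_hasSum_exp (-(h ^ 2 / (4 * s)))).mul_right (1 / (2 * s))
  have htermwise := hasSum_integral_of_summable_integral_norm (μ := volume.restrict (Ioi 0))
    (fun k => (hMint k).const_mul (a k)) (by simpa only [hnorm] using hexp.summable.abs)
  simp only [integral_const_mul, hM, hab] at htermwise
  rw [htermwise.unique hexp |>.symm]
  exact setIntegral_congr_fun measurableSet_Ioi fun u _ => (hseries u).tsum_eq.symm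

lemma one_add_sq_div_two_le_cosh (t : ℝ) : 1 + t ^ 2 / 2 ≤ cosh t := by
  have h := sum_le_hasSum (range 2)
    (fun k _ => div_nonneg ((even_two_mul k).pow_nonneg t) (by positivity)) (hasSum_cosh t)
  norm_num [sum_range_succ] at h
  linarith

lemma integrable_exp_neg_mul_cosh_mul_exp {h : ℝ} (hh : 0 < h) :
    Integrable fun t => exp (-(h * cosh t)) * exp t := by
  have hgauss : Integrable fun t => exp (-h + 1 / (2 * h)) * exp (-(h / 2) * (t - 1 / h) ^ 2) :=
    ((integrable_exp_neg_mul_sq (half_pos hh)).comp_sub_right (1 / h)).const_mul _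
  refine hgauss.mono' (by fun_prop) (.of_forall fun t => ?_)
  rw [Real.norm_of_nonneg (by positivity), ← exp_add, ← exp_add, exp_le_exp]
  have hcosh := mul_le_mul_of_nonneg_left (one_add_sq_div_two_le_cosh t) hh.le
  have hsq : -h + 1 / (2 * h) + -(h / 2) * (t - 1 / h) ^ 2 = -h - h / 2 * t ^ 2 + t := by
    field_simp
    ring
  linarith

lemma integral_mul_exp_eq_two_mul_integral_mul_cosh_Ioi {g : ℝ → ℝ} (hg : ∀ t, g (-t) = g t)
    (hint : Integrable fun t => g t * exp t) :
    ∫ t, g t * exp t = 2 * ∫ t in Ioi 0, g t * cosh t := by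
  have hint' : Integrable fun t => g t * exp (-t) := by simpa only [hg] using hint.comp_neg
  have hsymm : ∫ t, g t * exp (-t) = ∫ t, g t * exp t := by
    rw [← integral_neg_eq_self]
    simp only [hg, neg_neg]
  have habs (t : ℝ) : g |t| * cosh |t| = g t * cosh t := by
    rcases abs_choice t with ht | ht <;> simp only [ht, hg, cosh_neg]
  calc ∫ t, g t * exp t = ((∫ t, g t * exp t) + ∫ t, g t * exp (-t)) / 2 := by rw [hsymm]; ring
    _ = ∫ t, g t * cosh t := by
      rw [← integral_add hint hint', ← integral_div]
      simp only [cosh_eq]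
      ring_nf
    _ = 2 * ∫ t in Ioi 0, g t * cosh t := by
      rw [← integral_comp_abs (f := fun t => g t * cosh t)]
      simp only [habs]

lemma integral_exp_neg_mul_cosh_mul_exp {h : ℝ} (hh : 0 < h) :
    ∫ t, exp (-(h * cosh t)) * exp t = 2 * besselK 1 h := by
  rw [integral_mul_exp_eq_two_mul_integral_mul_cosh_Ioi (fun t => by rw [cosh_neg])
    (integrable_exp_neg_mul_cosh_mul_exp hh)]
  simp only [besselK, one_mul, neg_mul]

lemma integral_exp_neg_add_sq_div_Ioi {h : ℝ} (hh : 0 < h) :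
    ∫ s in Ioi (0:ℝ), exp (-(s + h ^ 2 / (4 * s))) = h * besselK 1 h := by
  have himage : (fun t => h / 2 * exp t) '' univ = Ioi (0:ℝ) := by
    rw [image_univ, range_comp' (h / 2 * ·) exp, range_exp, image_mul_left_Ioi (by positivity),
      mul_zero]
  rw [← himage, integral_image_eq_integral_abs_deriv_smul MeasurableSet.univ
    (fun t _ => ((hasDerivAt_exp t).const_mul (h / 2)).hasDerivWithinAt)
    (fun a _ b _ hab => exp_injective (mul_left_cancel₀ (by positivity) hab)),
    Measure.restrict_univ]
  have hsubst (t : ℝ) : |h / 2 * exp t| • exp (-(h / 2 * exp t + h ^ 2 / (4 * (h / 2 * exp t))))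
      = h / 2 * (exp (-(h * cosh t)) * exp t) := by
    have harg : h / 2 * exp t + h ^ 2 / (4 * (h / 2 * exp t)) = h * cosh t := by
      rw [cosh_eq, exp_neg]
      field_simp
      ring
    rw [harg, abs_of_pos (by positivity), smul_eq_mul]
    ring
  simp only [hsubst, integral_const_mul, integral_exp_neg_mul_cosh_mul_exp hh]
  ring

lemma integrable_mul_mul_exp_neg_one_add_sq_mul :
    Integrable (fun p : ℝ × ℝ => p.1 * (p.2 * exp (-((1 + p.1 ^ 2) * p.2))))
      ((volume.restrict (Ioi 0)).prod (volume.restrict (Ioi 0))) := by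
  have hinner (u : ℝ) : ∫ s in Ioi (0:ℝ), s * exp (-((1 + u ^ 2) * s)) = 1 / (1 + u ^ 2) ^ 2 :=
    integral_mul_exp_neg_mul_Ioi (by positivity)
  rw [integrable_prod_iff (Continuous.aestronglyMeasurable (by fun_prop))]
  constructor
  · refine .of_forall fun u => (Integrable.of_integral_ne_zero ?_).const_mul u
    rw [hinner]
    positivity
  · have hbound : IntegrableOn (fun u : ℝ => u * (1 / (1 + u ^ 2) ^ 2)) (Ioi 0) := by
      refine integrable_inv_one_add_sq.restrict.mono' (Continuous.aestronglyMeasurable ?_)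
        (.of_forall fun u => ?_)
      · exact continuous_id.mul (continuous_const.div (by fun_prop) fun u => by positivity)
      rw [norm_mul, Real.norm_eq_abs,
        Real.norm_of_nonneg (by positivity : (0:ℝ) ≤ 1 / (1 + u ^ 2) ^ 2)]
      calc |u| * (1 / (1 + u ^ 2) ^ 2) ≤ (1 + u ^ 2) * (1 / (1 + u ^ 2) ^ 2) := by
            gcongr
            nlinarith [sq_abs u, abs_nonneg u]
        _ = (1 + u ^ 2)⁻¹ := by field_simp
    refine hbound.congr (ae_restrict_of_forall_mem measurableSet_Ioi fun u (hu : 0 < u) => ?_)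
    dsimp only
    rw [← hinner, ← integral_const_mul]
    refine setIntegral_congr_fun measurableSet_Ioi fun s (hs : 0 < s) => ?_
    rw [Real.norm_of_nonneg (by positivity)]

lemma integrable_mul_besselJ0_mul_mul_exp_neg_one_add_sq_mul (h : ℝ) :
    Integrable (fun p : ℝ × ℝ => p.1 * besselJ0 (p.1 * h) * (p.2 * exp (-((1 + p.1 ^ 2) * p.2))))
      ((volume.restrict (Ioi 0)).prod (volume.restrict (Ioi 0))) := by
  have hcont : Continuous fun p : ℝ × ℝ =>
      p.1 * besselJ0 (p.1 * h) * (p.2 * exp (-((1 + p.1 ^ 2) * p.2))) := by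
    have := continuous_besselJ0
    fun_prop
  refine integrable_mul_mul_exp_neg_one_add_sq_mul.mono' hcont.aestronglyMeasurable ?_
  rw [Measure.prod_restrict]
  refine ae_restrict_of_forall_mem (measurableSet_Ioi.prod measurableSet_Ioi)
    fun p ⟨(hu : 0 < p.1), (hs : 0 < p.2)⟩ => ?_
  rw [norm_mul, norm_mul, Real.norm_of_nonneg hu.le, Real.norm_eq_abs,
    Real.norm_of_nonneg (by positivity : (0:ℝ) ≤ p.2 * exp (-((1 + p.1 ^ 2) * p.2)))]
  exact mul_le_mul_of_nonneg_right (mul_le_of_le_one_right hu.le (abs_besselJ0_le_one _))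
    (by positivity)

lemma integral_mul_besselJ0_div_one_add_sq_sq {h : ℝ} (hh : 0 < h) :
    ∫ u in Ioi (0:ℝ), u * besselJ0 (u * h) / (1 + u ^ 2) ^ 2 = h / 2 * besselK 1 h := by
  calc ∫ u in Ioi (0:ℝ), u * besselJ0 (u * h) / (1 + u ^ 2) ^ 2
      = ∫ u in Ioi (0:ℝ), ∫ s in Ioi (0:ℝ),
          u * besselJ0 (u * h) * (s * exp (-((1 + u ^ 2) * s))) := by
        refine setIntegral_congr_fun measurableSet_Ioi fun u _ => ?_
        rw [integral_const_mul, integral_mul_exp_neg_mul_Ioi (by positivity), mul_one_div]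
    _ = ∫ s in Ioi (0:ℝ), ∫ u in Ioi (0:ℝ),
          u * besselJ0 (u * h) * (s * exp (-((1 + u ^ 2) * s))) :=
        integral_integral_swap (integrable_mul_besselJ0_mul_mul_exp_neg_one_add_sq_mul h)
    _ = ∫ s in Ioi (0:ℝ), exp (-(s + h ^ 2 / (4 * s))) / 2 := by
        refine setIntegral_congr_fun measurableSet_Ioi fun s (hs : 0 < s) => ?_
        have hsplit (u : ℝ) : u * besselJ0 (u * h) * (s * exp (-((1 + u ^ 2) * s)))
            = s * exp (-s) * (u * besselJ0 (u * h) * exp (-(s * u ^ 2))) := by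
          rw [show -((1 + u ^ 2) * s) = -s + -(s * u ^ 2) by ring, exp_add]
          ring
        simp only [hsplit, integral_const_mul, integral_mul_besselJ0_mul_exp_neg_mul_sq h hs,
          neg_add, exp_add]
        field_simp
    _ = h / 2 * besselK 1 h := by
        rw [integral_div, integral_exp_neg_add_sq_div_Ioi hh]
        ring

/-- Two-dimensional Spartan covariance, case `η₁ = 2`:
`∫₀^∞ u J₀(uh)/(1+u²)² du = (h/2) K₁(h)`, hence
`C(h) = η₀ h K₁(h)/(4π)`. -/
theorem spartan_covariance_eta1_eq_two (h : ℝ) (hh : 0 < h) :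
    (∫ u in Set.Ioi (0:ℝ), u * besselJ0 (u * h) / (1 + u ^ 2) ^ 2)
      = (h / 2) * besselK 1 h ∧
    ∀ η0 : ℝ, 0 < η0 →
      (η0 / (2 * Real.pi)) *
          (∫ u in Set.Ioi (0:ℝ), u * besselJ0 (u * h) / (1 + 2 * u ^ 2 + u ^ 4))
        = η0 * h * besselK 1 h / (4 * Real.pi) := by
  have hsq (u : ℝ) : 1 + 2 * u ^ 2 + u ^ 4 = (1 + u ^ 2) ^ 2 := by ring
  refine ⟨integral_mul_besselJ0_div_one_add_sq_sq hh, fun η0 _ => ?_⟩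
  simp only [hsq, integral_mul_besselJ0_div_one_add_sq_sq hh]
  field_simp
  ring
end

section
/- For every integer d with 1 ≤ d ≤ 3, every η1 > −2, and every ξ > 0, the function k ↦ k^{d−1}/(1 + η1·(kξ)² + (kξ)⁴) is integrable on (0, ∞). Hence the SSRF spectral density with infinite cutoff satisfies the integrability condition of the Bochner–Khinchin permissibility theorem in dimensions d = 1, 2, 3. -/
/-!
For `η₁ > -2` the characteristic polynomial dominates a multiple of `1 + u⁴`, so the integrand
is continuous and `O(k⁻²)` at infinity; since `d - 1 ≤ 2`, this gives integrability.
-/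

open MeasureTheory Filter Asymptotics Set

def ssrfCharPoly (η1 u : ℝ) : ℝ := 1 + η1 * u ^ 2 + u ^ 4

section

variable {η1 : ℝ}

theorem exists_pos_mul_le_ssrfCharPoly (hη : -2 < η1) :
    ∃ c > 0, ∀ u, c * (1 + u ^ 4) ≤ ssrfCharPoly η1 u := by
  refine ⟨min 1 ((2 + η1) / 2), lt_min one_pos (by linarith), fun u => ?_⟩
  have h1 := min_le_left 1 ((2 + η1) / 2)
  have h2 := min_le_right 1 ((2 + η1) / 2)
  unfold ssrfCharPoly
  nlinarith [sq_nonneg (1 - u ^ 2), sq_nonneg u]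

theorem ssrfCharPoly_pos (hη : -2 < η1) (u : ℝ) : 0 < ssrfCharPoly η1 u := by
  obtain ⟨c, hc, hle⟩ := exists_pos_mul_le_ssrfCharPoly hη
  exact (mul_pos hc (by positivity)).trans_le (hle u)

variable {ξ : ℝ}

theorem continuous_pow_div_ssrfCharPoly (hη : -2 < η1) (n : ℕ) :
    Continuous fun k : ℝ => k ^ n / ssrfCharPoly η1 (k * ξ) :=
  (continuous_pow n).div (by unfold ssrfCharPoly; fun_prop)
    fun k => (ssrfCharPoly_pos hη _).ne'

theorem pow_div_ssrfCharPoly_isBigO_atTop (hη : -2 < η1) (hξ : ξ ≠ 0) {n : ℕ} (hn : n ≤ 2) :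
    (fun k : ℝ => k ^ n / ssrfCharPoly η1 (k * ξ)) =O[atTop] fun k => k ^ (-2 : ℝ) := by
  obtain ⟨c, hc, hle⟩ := exists_pos_mul_le_ssrfCharPoly hη
  have hcξ : 0 < c * ξ ^ 4 := by positivity
  refine IsBigO.of_bound (c * ξ ^ 4)⁻¹ ?_
  filter_upwards [eventually_ge_atTop 1] with k hk
  have hk0 : 0 < k := one_pos.trans_le hk
  have hden : c * ξ ^ 4 * k ^ 4 ≤ ssrfCharPoly η1 (k * ξ) := by
    nlinarith [hle (k * ξ)]
  rw [Real.norm_of_nonneg (div_nonneg (by positivity) (ssrfCharPoly_pos hη _).le),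
    Real.norm_of_nonneg (by positivity)]
  calc k ^ n / ssrfCharPoly η1 (k * ξ)
      ≤ k ^ 2 / (c * ξ ^ 4 * k ^ 4) :=
        div_le_div₀ (by positivity) (pow_le_pow_right₀ hk hn) (by positivity) hden
    _ = (c * ξ ^ 4)⁻¹ * k ^ (-2 : ℝ) := by
        rw [Real.rpow_neg hk0.le, Real.rpow_two]
        field_simp

theorem integrableOn_Ici_pow_div_ssrfCharPoly (hη : -2 < η1) (hξ : ξ ≠ 0) {n : ℕ}
    (hn : n ≤ 2) (a : ℝ) :
    IntegrableOn (fun k : ℝ => k ^ n / ssrfCharPoly η1 (k * ξ)) (Ici a) := by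
  have hcont := continuous_pow_div_ssrfCharPoly (ξ := ξ) hη n
  refine integrableOn_Ici_iff_integrableAtFilter_atTop.mpr
    ⟨?_, hcont.locallyIntegrable.locallyIntegrableOn _⟩
  exact (pow_div_ssrfCharPoly_isBigO_atTop hη hξ hn).integrableAtFilter
    hcont.stronglyMeasurable.stronglyMeasurableAtFilter
    (integrableAtFilter_rpow_atTop_iff.mpr (by norm_num))

end

theorem ssrf_spectral_density_integrable_general (d : ℕ) (hd3 : d ≤ 3)
    (η1 ξ : ℝ) (hη : -2 < η1) (hξ : 0 < ξ) :
    IntegrableOn (fun k : ℝ => k ^ (d - 1) / (1 + η1 * (k * ξ) ^ 2 + (k * ξ) ^ 4))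
      (Set.Ioi 0) :=
  (integrableOn_Ici_pow_div_ssrfCharPoly hη hξ.ne' (by omega) 0).mono_set Ioi_subset_Ici_self

/-- Integrability of the SSRF spectral density with infinite cutoff in dimensions
`d = 1, 2, 3`: the function `k ↦ k^(d−1)/(1 + η₁ (kξ)² + (kξ)⁴)` is integrable
on `(0,∞)`, so the Bochner–Khinchin integrability condition holds. -/
theorem ssrf_spectral_density_integrable (d : ℕ) (hd1 : 1 ≤ d) (hd3 : d ≤ 3)
    (η1 ξ : ℝ) (hη : -2 < η1) (hξ : 0 < ξ) :
    IntegrableOn (fun k : ℝ => k ^ (d - 1) / (1 + η1 * (k * ξ) ^ 2 + (k * ξ) ^ 4))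
      (Set.Ioi 0) :=
  ssrf_spectral_density_integrable_general d hd3 η1 ξ hη hξ
end

section
/- Let η1 > 2, 0 < α < 1, ξ > 0, and set Δ = √(η1² − 4). Then ∫₀^∞ x^{1+2α}/(1 + η1·ξ²·x² + ξ⁴·x⁴) dx = ξ^{−2−2α}·Γ(1−α)·Γ(1+α)·((η1 + Δ)^α − (η1 − Δ)^α)/(2^{α+1}·α·Δ). (This is the value of the integral I_α(φ) in the correlation-spectrum computation of Proposition 3 for η1 > 2.) -/
/-!
Since `η₁ > 2`, the polynomial `u² + η₁u + 1` factors as `(u + a)(u + b)` with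
`a, b = (η₁ ± Δ)/2` positive and distinct. The substitution `u = ξ²x²` turns the integral into
`(ξ²)^(-1-α)/2 · ∫₀^∞ u^α / ((u + a)(u + b)) du`, and partial fractions reduce this to the
Mellin transform `∫₀^∞ u^(α-1)/(u + c) du = c^(α-1) Γ(α) Γ(1-α)`, which becomes a Beta integral
after `t = u/(1 + u)`. It remains to use `Γ(1 + α) = α Γ(α)`.
-/

open MeasureTheory Real Set Filter Topology

theorem integral_rpow_mul_one_sub_rpow {p q : ℝ} (hp : 0 < p) (hq : 0 < q) :
    ∫ t in Ioo (0:ℝ) 1, t ^ (p - 1) * (1 - t) ^ (q - 1) = Gamma p * Gamma q / Gamma (p + q) := by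
  apply Complex.ofReal_injective
  calc ((∫ t in Ioo (0:ℝ) 1, t ^ (p - 1) * (1 - t) ^ (q - 1) : ℝ) : ℂ)
      = ∫ t in Ioo (0:ℝ) 1, (t : ℂ) ^ ((p : ℂ) - 1) * (1 - (t : ℂ)) ^ ((q : ℂ) - 1) := by
        rw [← integral_complex_ofReal]
        refine setIntegral_congr_fun measurableSet_Ioo fun t ht => ?_
        push_cast
        rw [Complex.ofReal_cpow ht.1.le, Complex.ofReal_cpow (sub_nonneg.2 ht.2.le)]
        push_cast
        rfl
    _ = Complex.betaIntegral p q := by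
        rw [Complex.betaIntegral, intervalIntegral.integral_of_le zero_le_one,
          integral_Ioc_eq_integral_Ioo]
    _ = _ := by
        rw [Complex.betaIntegral_eq_Gamma_mul_div _ _ (by simpa) (by simpa)]
        push_cast [← Complex.Gamma_ofReal]
        rfl

theorem image_div_one_add_Ioi : (fun x : ℝ => x / (1 + x)) '' Ioi 0 = Ioo 0 1 := by
  ext t
  constructor
  · rintro ⟨x, hx, rfl⟩
    have hx : 0 < x := hx
    exact ⟨by positivity, (div_lt_one (by positivity)).2 (by linarith)⟩
  · rintro ⟨ht0, ht1⟩
    have h1t : 0 < 1 - t := sub_pos.2 ht1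
    refine ⟨t / (1 - t), div_pos ht0 h1t, ?_⟩
    field_simp
    ring

theorem integral_rpow_mul_one_add_rpow_neg {p q : ℝ} (hp : 0 < p) (hq : 0 < q) :
    ∫ x in Ioi (0:ℝ), x ^ (p - 1) * (1 + x) ^ (-(p + q)) = Gamma p * Gamma q / Gamma (p + q) := by
  have hderiv : ∀ x ∈ Ioi (0:ℝ),
      HasDerivWithinAt (fun x : ℝ => x / (1 + x)) (((1 + x) ^ 2)⁻¹) (Ioi 0) x := by
    intro x (hx : 0 < x)
    have := (hasDerivAt_id x).div ((hasDerivAt_id x).const_add 1) (by positivity)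
    refine this.hasDerivWithinAt.congr_deriv ?_
    simp only [id]
    ring
  have hinj : InjOn (fun x : ℝ => x / (1 + x)) (Ioi 0) := by
    intro x (hx : 0 < x) y (hy : 0 < y) hxy
    field_simp at hxy
    linarith
  rw [← integral_rpow_mul_one_sub_rpow hp hq, ← image_div_one_add_Ioi,
    integral_image_eq_integral_abs_deriv_smul measurableSet_Ioi hderiv hinj]
  refine setIntegral_congr_fun measurableSet_Ioi fun x (hx : 0 < x) => ?_
  have hy : 0 < 1 + x := by linarith
  have hsub : 1 - x / (1 + x) = (1 + x)⁻¹ := by field_simp; ring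
  have hsplit : (1 + x) ^ (-(p + q))
      = ((1 + x) ^ (p - 1))⁻¹ * ((1 + x) ^ (q - 1))⁻¹ * ((1 + x) ^ 2)⁻¹ := by
    rw [show -(p + q) = -(p - 1) + -(q - 1) + -(2 : ℕ) by push_cast; ring,
      rpow_add hy, rpow_add hy, rpow_neg hy.le, rpow_neg hy.le, rpow_neg hy.le, rpow_natCast]
  rw [smul_eq_mul, abs_of_pos (by positivity), hsub, div_rpow hx.le hy.le, inv_rpow hy.le, hsplit]
  ring

theorem integral_rpow_div_add {s c : ℝ} (hs0 : 0 < s) (hs1 : s < 1) (hc : 0 < c) :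
    ∫ x in Ioi (0:ℝ), x ^ (s - 1) / (x + c) = c ^ (s - 1) * (Gamma s * Gamma (1 - s)) := by
  have hone : ∫ x in Ioi (0:ℝ), x ^ (s - 1) / (1 + x) = Gamma s * Gamma (1 - s) := by
    have h := integral_rpow_mul_one_add_rpow_neg hs0 (sub_pos.2 hs1)
    simp only [add_sub_cancel, Gamma_one, div_one, rpow_neg_one, ← div_eq_mul_inv] at h
    exact h
  have hscale := integral_comp_mul_left_Ioi (fun x : ℝ => x ^ (s - 1) / (x + c)) 0 hc
  have hpt : ∀ x ∈ Ioi (0:ℝ), (c * x) ^ (s - 1) / (c * x + c)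
      = c ^ (s - 1) * c⁻¹ * (x ^ (s - 1) / (1 + x)) := fun x (hx : 0 < x) => by
    rw [mul_rpow hc.le hx.le]
    field_simp
    ring
  rw [mul_zero, setIntegral_congr_fun measurableSet_Ioi hpt, integral_const_mul, hone,
    smul_eq_mul, eq_inv_mul_iff_mul_eq₀ hc.ne'] at hscale
  rw [← hscale]
  field_simp

theorem integrableOn_rpow_div_add {s c : ℝ} (hs0 : 0 < s) (hs1 : s < 1) (hc : 0 < c) :
    IntegrableOn (fun x : ℝ => x ^ (s - 1) / (x + c)) (Ioi 0) := by
  have hcont : ContinuousOn (fun x : ℝ => (x + c)⁻¹) (Ici 0) :=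
    (continuousOn_id.add continuousOn_const).inv₀
      fun x (hx : 0 ≤ x) => (add_pos_of_nonneg_of_pos hx hc).ne'
  have htop : (fun x : ℝ => (x + c)⁻¹) =O[atTop] (· ^ (-1 : ℝ)) := by
    refine Asymptotics.IsBigO.of_bound 1 ?_
    filter_upwards [eventually_gt_atTop 0] with x hx
    rw [rpow_neg_one, one_mul, norm_inv, norm_inv, norm_of_nonneg hx.le,
      norm_of_nonneg (by positivity)]
    exact inv_anti₀ hx (by linarith)
  have hbot : (fun x : ℝ => (x + c)⁻¹) =O[𝓝[>] 0] (· ^ (-0 : ℝ)) := by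
    simp only [neg_zero, rpow_zero]
    exact ((hcont.continuousWithinAt self_mem_Ici).mono Ioi_subset_Ici_self).isBigO_one ℝ
  simpa only [div_eq_mul_inv] using mellin_convergent_of_isBigO_scalar
    ((hcont.mono Ioi_subset_Ici_self).locallyIntegrableOn measurableSet_Ioi) htop hs1 hbot hs0

theorem integral_rpow_div_add_mul_add {s a b : ℝ} (hs0 : 0 < s) (hs1 : s < 1) (ha : 0 < a)
    (hb : 0 < b) (hab : a ≠ b) :
    ∫ u in Ioi (0:ℝ), u ^ s / ((u + a) * (u + b))
      = Gamma s * Gamma (1 - s) * (a ^ s - b ^ s) / (a - b) := by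
  have hab' : a - b ≠ 0 := sub_ne_zero.2 hab
  have hpartial : ∀ u ∈ Ioi (0:ℝ), u ^ s / ((u + a) * (u + b))
      = (a - b)⁻¹ * (a * (u ^ (s - 1) / (u + a)) - b * (u ^ (s - 1) / (u + b))) :=
    fun u (hu : 0 < u) => by
      have hua : 0 < u + a := by linarith
      have hub : 0 < u + b := by linarith
      rw [rpow_sub_one hu.ne']
      field_simp
      ring
  rw [setIntegral_congr_fun measurableSet_Ioi hpartial, integral_const_mul,
    integral_sub ((integrableOn_rpow_div_add hs0 hs1 ha).const_mul a)
      ((integrableOn_rpow_div_add hs0 hs1 hb).const_mul b),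
    integral_const_mul, integral_const_mul, integral_rpow_div_add hs0 hs1 ha,
    integral_rpow_div_add hs0 hs1 hb, rpow_sub_one ha.ne', rpow_sub_one hb.ne']
  field_simp

theorem integral_rpow_mul_comp_mul_sq (f : ℝ → ℝ) (s : ℝ) {c : ℝ} (hc : 0 < c) :
    ∫ x in Ioi (0:ℝ), x ^ (2 * s - 1) * f (c * x ^ 2)
      = c ^ (-s) / 2 * ∫ u in Ioi (0:ℝ), u ^ (s - 1) * f u := by
  have hsq := integral_comp_rpow_Ioi_of_pos (g := fun y => y ^ (s - 1) * f (c * y)) two_pos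
  have hscale := integral_comp_mul_left_Ioi (fun u => u ^ (s - 1) * f u) 0 hc
  have hsq_pt : ∀ x ∈ Ioi (0:ℝ), x ^ (2 * s - 1) * f (c * x ^ 2)
      = 2⁻¹ * ((2 * x ^ ((2:ℝ) - 1)) • ((x ^ (2:ℝ)) ^ (s - 1) * f (c * x ^ (2:ℝ)))) :=
    fun x (hx : 0 < x) => by
      rw [← rpow_mul hx.le, rpow_two, smul_eq_mul,
        show 2 * s - 1 = (2 - 1) + 2 * (s - 1) by ring, rpow_add hx]
      ring
  have hscale_pt : ∀ y ∈ Ioi (0:ℝ), y ^ (s - 1) * f (c * y)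
      = c ^ (1 - s) * ((c * y) ^ (s - 1) * f (c * y)) := fun y (hy : 0 < y) => by
    rw [mul_rpow hc.le hy.le, ← mul_assoc, ← mul_assoc, ← rpow_add hc]
    simp
  rw [setIntegral_congr_fun measurableSet_Ioi hsq_pt, integral_const_mul, hsq,
    setIntegral_congr_fun measurableSet_Ioi hscale_pt, integral_const_mul, hscale, mul_zero,
    smul_eq_mul, rpow_neg hc.le, rpow_sub hc, rpow_one]
  field_simp

/-- Value of the correlation-spectrum integral `I_α(φ)` for `η₁ > 2`:
`∫₀^∞ x^{1+2α}/(1 + η₁ξ²x² + ξ⁴x⁴) dx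
  = ξ^{−2−2α} Γ(1−α) Γ(1+α) ((η₁+Δ)^α − (η₁−Δ)^α)/(2^{α+1} α Δ)`. -/
theorem ssrf_correlation_integral_eta1_gt_two (η1 α ξ Δ : ℝ)
    (hη : 2 < η1) (hα0 : 0 < α) (hα1 : α < 1) (hξ : 0 < ξ)
    (hΔ : Δ = Real.sqrt (η1 ^ 2 - 4)) :
    (∫ x in Set.Ioi (0:ℝ), x ^ (1 + 2 * α) / (1 + η1 * ξ ^ 2 * x ^ 2 + ξ ^ 4 * x ^ 4))
      = ξ ^ (-2 - 2 * α) * Real.Gamma (1 - α) * Real.Gamma (1 + α)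
          * ((η1 + Δ) ^ α - (η1 - Δ) ^ α) / (2 ^ (α + 1) * α * Δ) := by
  have hΔsq : Δ ^ 2 = η1 ^ 2 - 4 := by rw [hΔ, sq_sqrt (by nlinarith)]
  have hΔ0 : 0 < Δ := by rw [hΔ]; exact sqrt_pos.2 (by nlinarith)
  have hΔη : Δ < η1 := by nlinarith
  set a := (η1 + Δ) / 2
  set b := (η1 - Δ) / 2
  have hfactor : ∀ u, 1 + η1 * u + u ^ 2 = (u + a) * (u + b) := fun u => by
    simp only [a, b]
    linear_combination (1 / 4 : ℝ) * hΔsq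
  calc (∫ x in Ioi (0:ℝ), x ^ (1 + 2 * α) / (1 + η1 * ξ ^ 2 * x ^ 2 + ξ ^ 4 * x ^ 4))
      = ∫ x in Ioi (0:ℝ),
          x ^ (2 * (1 + α) - 1) * ((ξ ^ 2 * x ^ 2 + a) * (ξ ^ 2 * x ^ 2 + b))⁻¹ := by
        congr! 2 with x
        rw [← hfactor, div_eq_mul_inv]
        ring_nf
    _ = (ξ ^ 2) ^ (-(1 + α)) / 2 * ∫ u in Ioi (0:ℝ), u ^ α / ((u + a) * (u + b)) := by
        rw [integral_rpow_mul_comp_mul_sq (fun u => ((u + a) * (u + b))⁻¹) _ (by positivity)]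
        simp only [add_sub_cancel_left, div_eq_mul_inv]
    _ = (ξ ^ 2) ^ (-(1 + α)) / 2 * (Gamma α * Gamma (1 - α) * (a ^ α - b ^ α) / (a - b)) := by
        rw [integral_rpow_div_add_mul_add hα0 hα1 (by positivity) (by simp only [b]; linarith)
          (by simp only [a, b]; linarith)]
    _ = _ := by
        have hsub : a - b = Δ := by ring
        rw [← rpow_natCast, ← rpow_mul hξ.le,
          show ((2 : ℕ) : ℝ) * -(1 + α) = -2 - 2 * α by push_cast; ring,
          div_rpow (by linarith) zero_le_two, div_rpow (by linarith) zero_le_two, hsub,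
          add_comm 1 α, Gamma_add_one hα0.ne', rpow_add_one two_ne_zero]
        field_simp
end

section
/- Let η1 > −2, 0 < α < 1, ξ > 0, and define κ̃₁ = (1/ξ)·√( (√(η1²(1−α)² + 4α(2−α)) − η1(1−α)) / (2(2−α)) ). Then κ̃₁ > 0 and the function f(k) = k^{2α}/(1 + η1·(kξ)² + (kξ)⁴) attains its supremum over (0, ∞) at k = κ̃₁; moreover κ̃₁ is the unique critical point of f on (0, ∞), and f(k) < f(κ̃₁) for every k > 0 with k ≠ κ̃₁. -/
/-!
With `t = (kξ)²`, `f'(k) = 2 k^{2α-1} (α - η₁(1-α) t - (2-α) t²) / Π(kξ)²`. The quadratic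
`(2-α) t² + η₁(1-α) t - α` has positive leading coefficient and negative constant term, so it has
exactly one positive root `t₁`, and `κ̃₁` is defined by `(κ̃₁ξ)² = t₁`. Hence `f'` is positive on
`(0, κ̃₁)` and negative on `(κ̃₁, ∞)`, so `f` has a strict maximum at `κ̃₁`, and Fermat's theorem
gives `f'(κ̃₁) = 0`.
-/

open Real Set

theorem one_add_mul_sq_add_pow_four_pos {η : ℝ} (hη : -2 < η) (u : ℝ) :
    0 < 1 + η * u ^ 2 + u ^ 4 := by
  nlinarith [sq_nonneg (1 - u ^ 2), mul_nonneg (by linarith : (0:ℝ) ≤ 2 + η) (sq_nonneg u)]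

theorem abs_lt_sqrt_sq_add {b d : ℝ} (hd : 0 < d) : |b| < √(b ^ 2 + d) :=
  abs_lt.2 ⟨neg_lt.1 (lt_sqrt_of_sq_lt (by nlinarith)), lt_sqrt_of_sq_lt (by nlinarith)⟩

section QuadraticRoot

variable {a b c r : ℝ} (ha : 0 < a) (hr : r = (√(b ^ 2 + 4 * a * c) - b) / (2 * a))
include ha hr

theorem two_mul_mul_root_add_eq_sqrt : 2 * a * r + b = √(b ^ 2 + 4 * a * c) := by
  rw [hr]; field_simp; ring

theorem root_quadratic_eq (hc : 0 ≤ c) : a * r ^ 2 + b * r = c := by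
  have hs := sq_sqrt (by positivity : 0 ≤ b ^ 2 + 4 * a * c)
  rw [← two_mul_mul_root_add_eq_sqrt ha hr] at hs
  apply mul_left_cancel₀ (by positivity : 4 * a ≠ 0)
  linear_combination hs

variable (hc : 0 < c)
include hc

theorem abs_lt_two_mul_mul_root_add : |b| < 2 * a * r + b :=
  two_mul_mul_root_add_eq_sqrt ha hr ▸ abs_lt_sqrt_sq_add (by positivity)

theorem root_pos : 0 < r := by
  nlinarith [le_abs_self b, abs_lt_two_mul_mul_root_add ha hr hc]

theorem mul_root_add_pos : 0 < a * r + b := by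
  linarith [neg_abs_le b, abs_lt_two_mul_mul_root_add ha hr hc]

end QuadraticRoot

theorem hasDerivAt_rpow_div_ssrf (η α ξ : ℝ) {k : ℝ} (hk : 0 < k)
    (hP : 1 + η * (k * ξ) ^ 2 + (k * ξ) ^ 4 ≠ 0) :
    HasDerivAt (fun k : ℝ => k ^ (2 * α) / (1 + η * (k * ξ) ^ 2 + (k * ξ) ^ 4))
      (2 * k ^ (2 * α - 1) / (1 + η * (k * ξ) ^ 2 + (k * ξ) ^ 4) ^ 2 *
        (α - η * (1 - α) * (k * ξ) ^ 2 - (2 - α) * ((k * ξ) ^ 2) ^ 2)) k := by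
  have hnum : HasDerivAt (fun k : ℝ => k ^ (2 * α)) (2 * α * k ^ (2 * α - 1)) k :=
    hasDerivAt_rpow_const (Or.inl hk.ne')
  have hlin : HasDerivAt (fun k : ℝ => k * ξ) ξ k := by
    simpa using (hasDerivAt_id k).mul_const ξ
  have hden : HasDerivAt (fun k : ℝ => 1 + η * (k * ξ) ^ 2 + (k * ξ) ^ 4)
      (η * (2 * (k * ξ) * ξ) + 4 * (k * ξ) ^ 3 * ξ) k :=
    (((hlin.pow 2).const_mul η).const_add 1).add (hlin.pow 4) |>.congr_deriv (by push_cast; ring)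
  have hk_rpow : k ^ (2 * α) = k ^ (2 * α - 1) * k := by
    rw [← rpow_add_one hk.ne']; ring_nf
  refine (hnum.div hden hP).congr_deriv ?_
  rw [hk_rpow]
  field_simp
  ring

theorem exists_pos_hasDerivAt_rpow_div_ssrf_mul_sub {η α ξ κ k : ℝ} (hη : -2 < η) (hα : α ≤ 2)
    (hξ : ξ ≠ 0) (hκ : 0 ≤ κ) (hk : 0 < k)
    (hroot : (2 - α) * ((κ * ξ) ^ 2) ^ 2 + η * (1 - α) * (κ * ξ) ^ 2 = α)
    (hroot_lin : 0 < (2 - α) * (κ * ξ) ^ 2 + η * (1 - α)) :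
    ∃ Q, 0 < Q ∧ HasDerivAt (fun k : ℝ => k ^ (2 * α) / (1 + η * (k * ξ) ^ 2 + (k * ξ) ^ 4))
      (Q * (κ - k)) k := by
  have hP := one_add_mul_sq_add_pow_four_pos hη (k * ξ)
  have hfactor : 0 < (2 - α) * ((k * ξ) ^ 2 + (κ * ξ) ^ 2) + η * (1 - α) := by
    nlinarith [mul_nonneg (sub_nonneg.2 hα) (sq_nonneg (k * ξ))]
  refine ⟨2 * k ^ (2 * α - 1) / (1 + η * (k * ξ) ^ 2 + (k * ξ) ^ 4) ^ 2 * ξ ^ 2 * (κ + k) *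
    ((2 - α) * ((k * ξ) ^ 2 + (κ * ξ) ^ 2) + η * (1 - α)), by positivity,
    (hasDerivAt_rpow_div_ssrf η α ξ hk hP.ne').congr_deriv ?_⟩
  -- `(κξ)² - (kξ)² = ξ² (κ + k) (κ - k)` is the factor of the quadratic at its root `(κξ)²`.
  linear_combination (-(2 * k ^ (2 * α - 1) / (1 + η * (k * ξ) ^ 2 + (k * ξ) ^ 4) ^ 2)) * hroot

section DerivSign

variable {f : ℝ → ℝ} {a κ : ℝ} (hκ : a < κ) (hf : DifferentiableOn ℝ f (Ioi a))
  (hpos : ∀ k ∈ Ioo a κ, 0 < deriv f k) (hneg : ∀ k ∈ Ioi κ, deriv f k < 0)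
include hκ hf hpos hneg

theorem lt_of_deriv_pos_of_deriv_neg {k : ℝ} (hk : a < k) (hne : k ≠ κ) : f k < f κ := by
  rcases hne.lt_or_gt with hlt | hgt
  · refine strictMonoOn_of_deriv_pos (convex_Ioc a κ) (hf.mono Ioc_subset_Ioi_self).continuousOn
      ?_ ⟨hk, hlt.le⟩ ⟨hκ, le_rfl⟩ hlt
    simpa only [interior_Ioc] using hpos
  · refine strictAntiOn_of_deriv_neg (convex_Ici κ) (hf.mono (Ici_subset_Ioi.2 hκ)).continuousOn
      ?_ self_mem_Ici hgt.le hgt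
    simpa only [interior_Ici] using hneg

theorem deriv_eq_zero_iff_of_deriv_pos_of_deriv_neg {k : ℝ} (hk : a < k) :
    deriv f k = 0 ↔ k = κ := by
  refine ⟨fun h0 => by_contra fun hne => ?_, ?_⟩
  · rcases Ne.lt_or_gt hne with hlt | hgt
    · exact (hpos k ⟨hk, hlt⟩).ne' h0
    · exact (hneg k hgt).ne h0
  · rintro rfl
    refine IsLocalMax.deriv_eq_zero <|
      Filter.eventually_of_mem (Ioi_mem_nhds hk) fun x (hx : a < x) => ?_
    rcases eq_or_ne x k with rfl | hne
    · exact le_rfl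
    · exact (lt_of_deriv_pos_of_deriv_neg hκ hf hpos hneg hx hne).le

end DerivSign

/-- The function `f(k) = k^{2α}/(1 + η₁(kξ)² + (kξ)⁴)` attains its supremum over
`(0,∞)` at the unique critical point
`κ̃₁ = (1/ξ)√((√(η₁²(1−α)² + 4α(2−α)) − η₁(1−α))/(2(2−α)))`, and the maximum is strict. -/
theorem ssrf_spectral_sup_location (η1 α ξ κ : ℝ) (f : ℝ → ℝ)
    (hη : -2 < η1) (hα0 : 0 < α) (hα1 : α < 1) (hξ : 0 < ξ)
    (hκ : κ = (1 / ξ) * Real.sqrt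
        ((Real.sqrt (η1 ^ 2 * (1 - α) ^ 2 + 4 * α * (2 - α)) - η1 * (1 - α))
          / (2 * (2 - α))))
    (hf : f = fun k : ℝ => k ^ (2 * α) / (1 + η1 * (k * ξ) ^ 2 + (k * ξ) ^ 4)) :
    0 < κ ∧
    (∀ k : ℝ, 0 < k → f k ≤ f κ) ∧
    (∀ k : ℝ, 0 < k → (deriv f k = 0 ↔ k = κ)) ∧
    (∀ k : ℝ, 0 < k → k ≠ κ → f k < f κ) := by
  have ha : 0 < 2 - α := by linarith
  rw [show η1 ^ 2 * (1 - α) ^ 2 + 4 * α * (2 - α) = (η1 * (1 - α)) ^ 2 + 4 * (2 - α) * α by ring]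
    at hκ
  generalize hr : (√((η1 * (1 - α)) ^ 2 + 4 * (2 - α) * α) - η1 * (1 - α)) / (2 * (2 - α)) = r
    at hκ
  have hr0 : 0 < r := root_pos ha hr.symm hα0
  have hκ0 : 0 < κ := hκ ▸ mul_pos (by positivity) (sqrt_pos.2 hr0)
  have hκr : (κ * ξ) ^ 2 = r := by
    rw [hκ, mul_pow, mul_pow, sq_sqrt hr0.le]; field_simp
  have hderiv (k : ℝ) (hk : 0 < k) : ∃ Q, 0 < Q ∧ HasDerivAt f (Q * (κ - k)) k :=
    hf ▸ exists_pos_hasDerivAt_rpow_div_ssrf_mul_sub hη (by linarith) hξ.ne' hκ0.le hk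
      (hκr ▸ root_quadratic_eq ha hr.symm hα0.le) (hκr ▸ mul_root_add_pos ha hr.symm hα0)
  choose Q hQ0 hQ using hderiv
  have hdiff : DifferentiableOn ℝ f (Ioi 0) := fun k hk =>
    (hQ k hk).differentiableAt.differentiableWithinAt
  have hpos : ∀ k ∈ Ioo 0 κ, 0 < deriv f k := fun k hk =>
    (hQ k hk.1).deriv ▸ mul_pos (hQ0 k hk.1) (sub_pos.2 hk.2)
  have hneg : ∀ k ∈ Ioi κ, deriv f k < 0 := fun k hk =>
    (hQ k (hκ0.trans hk)).deriv ▸ mul_neg_of_pos_of_neg (hQ0 k _) (sub_neg.2 hk)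
  have hmax : ∀ k, 0 < k → k ≠ κ → f k < f κ := fun k hk hne =>
    lt_of_deriv_pos_of_deriv_neg hκ0 hdiff hpos hneg hk hne
  refine ⟨hκ0, fun k hk => ?_, fun k hk => deriv_eq_zero_iff_of_deriv_pos_of_deriv_neg hκ0 hdiff
    hpos hneg hk, hmax⟩
  rcases eq_or_ne k κ with rfl | hne
  exacts [le_rfl, (hmax k hk hne).le]
end

section
/- Let 0 < α ≤ 1 and −2 < η1 < 0 satisfy (α+1)²·η1² > 4α(α+2), and define u_± = √( (−(α+1)·η1 ± √((α+1)²η1² − 4α(α+2))) / (2(α+2)) ). Then 0 < u_− < u_+, the function φ(u) = u^{2α}·(1 + η1·u² + u⁴) has exactly two critical points on (0, ∞), namely u_− and u_+, and φ has a strict local maximum at u_− and a strict local minimum at u_+. -/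
/-!
Since `φ'(u) = 2 u^{2α-1} ((α+2) u⁴ + (α+1) η₁ u² + α)`, the critical points of `φ` on `(0, ∞)`
are the square roots of the roots of the quadratic `(α+2) t² + (α+1) η₁ t + α`. Its coefficients
alternate in sign and the threshold condition makes its discriminant positive, so its roots are
`0 < u₋² < u₊²`, and factoring gives `φ'(u) = g(u) (u - u₋)(u - u₊)` with `g > 0` on `(0, ∞)`.
Hence `φ'` changes sign from `+` to `-` at `u₋` and from `-` to `+` at `u₊`.
-/

open Set Topology

theorem quadratic_eq_mul_sub_mul_sub {a b c s t : ℝ} (ha : a ≠ 0) (hs : discrim a b c = s * s) :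
    a * t ^ 2 + b * t + c = a * (t - (-b - s) / (2 * a)) * (t - (-b + s) / (2 * a)) := by
  rw [discrim] at hs
  field_simp
  linear_combination (-1 : ℝ) * hs

theorem quadratic_smaller_root_pos {a b c s : ℝ} (ha : 0 < a) (hc : 0 < c) (hb : b < 0)
    (hs : discrim a b c = s * s) : 0 < (-b - s) / (2 * a) := by
  rw [discrim] at hs
  have : s < -b := by nlinarith [mul_pos ha hc]
  exact div_pos (by linarith) (by linarith)

theorem hasDerivAt_rpow_mul_quartic (α η : ℝ) {u : ℝ} (hu : 0 < u) :
    HasDerivAt (fun u : ℝ => u ^ (2 * α) * (1 + η * u ^ 2 + u ^ 4))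
      (2 * u ^ (2 * α - 1) * ((α + 2) * (u ^ 2) ^ 2 + (α + 1) * η * u ^ 2 + α)) u := by
  have hpow : HasDerivAt (fun x : ℝ => x ^ (2 * α)) (2 * α * u ^ (2 * α - 1)) u :=
    Real.hasDerivAt_rpow_const (Or.inl hu.ne')
  have hpoly : HasDerivAt (fun x : ℝ => 1 + η * x ^ 2 + x ^ 4) (η * (2 * u) + 4 * u ^ 3) u := by
    refine (((hasDerivAt_const u 1).add ((hasDerivAt_pow 2 u).const_mul η)).add
      (hasDerivAt_pow 4 u)).congr_deriv ?_
    norm_num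
  refine (hpow.mul hpoly).congr_deriv ?_
  rw [Real.rpow_sub_one hu.ne']
  field_simp
  ring

theorem eventually_nhdsNE_lt_of_deriv_pos_of_deriv_neg {f : ℝ → ℝ} {a x b : ℝ} (hax : a < x)
    (hxb : x < b) (hf : ContinuousOn f (Icc a b)) (hleft : ∀ y ∈ Ioo a x, 0 < deriv f y)
    (hright : ∀ y ∈ Ioo x b, deriv f y < 0) : ∀ᶠ y in 𝓝[≠] x, f y < f x := by
  have hmono : StrictMonoOn f (Icc a x) :=
    strictMonoOn_of_deriv_pos (convex_Icc a x) (hf.mono (Icc_subset_Icc_right hxb.le))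
      (by rwa [interior_Icc])
  have hanti : StrictAntiOn f (Icc x b) :=
    strictAntiOn_of_deriv_neg (convex_Icc x b) (hf.mono (Icc_subset_Icc_left hax.le))
      (by rwa [interior_Icc])
  filter_upwards [self_mem_nhdsWithin, mem_nhdsWithin_of_mem_nhds (Ioo_mem_nhds hax hxb)]
    with y hne hy
  rcases lt_or_gt_of_ne hne with h | h
  · exact hmono ⟨hy.1.le, h.le⟩ ⟨hax.le, le_rfl⟩ h
  · exact hanti ⟨le_rfl, hxb.le⟩ ⟨h.le, hy.2.le⟩ h

theorem eventually_nhdsNE_gt_of_deriv_neg_of_deriv_pos {f : ℝ → ℝ} {a x b : ℝ} (hax : a < x)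
    (hxb : x < b) (hf : ContinuousOn f (Icc a b)) (hleft : ∀ y ∈ Ioo a x, deriv f y < 0)
    (hright : ∀ y ∈ Ioo x b, 0 < deriv f y) : ∀ᶠ y in 𝓝[≠] x, f x < f y := by
  have := eventually_nhdsNE_lt_of_deriv_pos_of_deriv_neg (f := -f) hax hxb hf.neg
    (fun y hy => by simpa [deriv.neg] using hleft y hy)
    (fun y hy => by simpa [deriv.neg] using hright y hy)
  simpa using this

section DerivMulSubMulSub

variable {f g : ℝ → ℝ} {p q : ℝ}

theorem deriv_eq_zero_iff_of_hasDerivAt_mul_sub_mul_sub (hg : ∀ u, 0 < u → 0 < g u)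
    (hf : ∀ u, 0 < u → HasDerivAt f (g u * ((u - p) * (u - q))) u) {u : ℝ} (hu : 0 < u) :
    deriv f u = 0 ↔ u = p ∨ u = q := by
  rw [(hf u hu).deriv, mul_eq_zero, mul_eq_zero, sub_eq_zero, sub_eq_zero]
  simp [(hg u hu).ne']

theorem eventually_nhdsNE_lt_of_hasDerivAt_mul_sub_mul_sub (hp : 0 < p) (hpq : p < q)
    (hg : ∀ u, 0 < u → 0 < g u)
    (hf : ∀ u, 0 < u → HasDerivAt f (g u * ((u - p) * (u - q))) u) :
    ∀ᶠ x in 𝓝[≠] p, f x < f p := by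
  refine eventually_nhdsNE_lt_of_deriv_pos_of_deriv_neg (a := p / 2) (b := (p + q) / 2)
    (by linarith) (by linarith) (HasDerivAt.continuousOn fun u hu => hf u (by linarith [hu.1]))
    (fun y hy => ?_) (fun y hy => ?_)
  all_goals
    have hy0 : 0 < y := by linarith [hy.1]
    rw [(hf y hy0).deriv]
  · exact mul_pos (hg y hy0) (mul_pos_of_neg_of_neg (by linarith [hy.2]) (by linarith [hy.2]))
  · exact mul_neg_of_pos_of_neg (hg y hy0)
      (mul_neg_of_pos_of_neg (by linarith [hy.1]) (by linarith [hy.2]))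

theorem eventually_nhdsNE_gt_of_hasDerivAt_mul_sub_mul_sub (hp : 0 < p) (hpq : p < q)
    (hg : ∀ u, 0 < u → 0 < g u)
    (hf : ∀ u, 0 < u → HasDerivAt f (g u * ((u - p) * (u - q))) u) :
    ∀ᶠ x in 𝓝[≠] q, f q < f x := by
  refine eventually_nhdsNE_gt_of_deriv_neg_of_deriv_pos (a := (p + q) / 2) (b := q + 1)
    (by linarith) (by linarith) (HasDerivAt.continuousOn fun u hu => hf u (by linarith [hu.1]))
    (fun y hy => ?_) (fun y hy => ?_)
  all_goals
    have hy0 : 0 < y := by linarith [hy.1]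
    rw [(hf y hy0).deriv]
  · exact mul_neg_of_pos_of_neg (hg y hy0)
      (mul_neg_of_pos_of_neg (by linarith [hy.1]) (by linarith [hy.2]))
  · exact mul_pos (hg y hy0) (mul_pos (by linarith [hy.1]) (by linarith [hy.1]))

end DerivMulSubMulSub

theorem bessel_lommel_phi_critical_points_general (α η1 um up : ℝ) (φ : ℝ → ℝ)
    (hα0 : 0 < α) (hη2 : η1 < 0)
    (hthr : 4 * α * (α + 2) < (α + 1) ^ 2 * η1 ^ 2)
    (hum : um = Real.sqrt
        ((-(α + 1) * η1 - Real.sqrt ((α + 1) ^ 2 * η1 ^ 2 - 4 * α * (α + 2)))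
          / (2 * (α + 2))))
    (hup : up = Real.sqrt
        ((-(α + 1) * η1 + Real.sqrt ((α + 1) ^ 2 * η1 ^ 2 - 4 * α * (α + 2)))
          / (2 * (α + 2))))
    (hφ : φ = fun u : ℝ => u ^ (2 * α) * (1 + η1 * u ^ 2 + u ^ 4)) :
    0 < um ∧ um < up ∧
    (∀ u : ℝ, 0 < u → (deriv φ u = 0 ↔ u = um ∨ u = up)) ∧
    (∀ᶠ x in 𝓝[≠] um, φ x < φ um) ∧
    (∀ᶠ x in 𝓝[≠] up, φ up < φ x) := by
  rw [neg_mul] at hum hup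
  set s := √((α + 1) ^ 2 * η1 ^ 2 - 4 * α * (α + 2))
  set tm := (-((α + 1) * η1) - s) / (2 * (α + 2))
  set tp := (-((α + 1) * η1) + s) / (2 * (α + 2))
  have hs : 0 < s := Real.sqrt_pos.mpr (by linarith)
  have hdisc : discrim (α + 2) ((α + 1) * η1) α = s * s := by
    rw [Real.mul_self_sqrt (by linarith), discrim]; ring
  have htm : 0 < tm :=
    quadratic_smaller_root_pos (by linarith) hα0 (mul_neg_of_pos_of_neg (by linarith) hη2) hdisc
  have htmtp : tm < tp := div_lt_div_of_pos_right (by linarith) (by linarith)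
  have hum2 : um ^ 2 = tm := hum ▸ Real.sq_sqrt htm.le
  have hup2 : up ^ 2 = tp := hup ▸ Real.sq_sqrt (htm.trans htmtp).le
  have hum0 : 0 < um := hum ▸ Real.sqrt_pos.mpr htm
  have humup : um < up := hum ▸ hup ▸ Real.sqrt_lt_sqrt htm.le htmtp
  have hderiv : ∀ u, 0 < u → HasDerivAt φ
      (2 * (α + 2) * u ^ (2 * α - 1) * (u + um) * (u + up) * ((u - um) * (u - up))) u := by
    intro u hu
    have hfac : (α + 2) * (u ^ 2) ^ 2 + (α + 1) * η1 * u ^ 2 + α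
        = (α + 2) * (u ^ 2 - um ^ 2) * (u ^ 2 - up ^ 2) := by
      rw [hum2, hup2]; exact quadratic_eq_mul_sub_mul_sub (by linarith) hdisc
    convert hφ ▸ hasDerivAt_rpow_mul_quartic α η1 hu using 1
    rw [hfac]; ring
  have hg : ∀ u : ℝ, 0 < u → 0 < 2 * (α + 2) * u ^ (2 * α - 1) * (u + um) * (u + up) :=
    fun u hu => mul_pos (mul_pos (mul_pos (by linarith) (Real.rpow_pos_of_pos hu _))
      (by linarith)) (by linarith)
  exact ⟨hum0, humup, fun u hu => deriv_eq_zero_iff_of_hasDerivAt_mul_sub_mul_sub hg hderiv hu,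
    eventually_nhdsNE_lt_of_hasDerivAt_mul_sub_mul_sub hum0 humup hg hderiv,
    eventually_nhdsNE_gt_of_hasDerivAt_mul_sub_mul_sub hum0 humup hg hderiv⟩

/-- For `0 < α ≤ 1` and `−2 < η₁ < 0` with `(α+1)²η₁² > 4α(α+2)`, the function
`φ(u) = u^{2α}(1 + η₁u² + u⁴)` has exactly two critical points `0 < u₋ < u₊`
on `(0,∞)`, with a strict local maximum at `u₋` and a strict local minimum at `u₊`. -/
theorem bessel_lommel_phi_critical_points (α η1 um up : ℝ) (φ : ℝ → ℝ)
    (hα0 : 0 < α) (hα1 : α ≤ 1) (hη1 : -2 < η1) (hη2 : η1 < 0)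
    (hthr : 4 * α * (α + 2) < (α + 1) ^ 2 * η1 ^ 2)
    (hum : um = Real.sqrt
        ((-(α + 1) * η1 - Real.sqrt ((α + 1) ^ 2 * η1 ^ 2 - 4 * α * (α + 2)))
          / (2 * (α + 2))))
    (hup : up = Real.sqrt
        ((-(α + 1) * η1 + Real.sqrt ((α + 1) ^ 2 * η1 ^ 2 - 4 * α * (α + 2)))
          / (2 * (α + 2))))
    (hφ : φ = fun u : ℝ => u ^ (2 * α) * (1 + η1 * u ^ 2 + u ^ 4)) :
    0 < um ∧ um < up ∧
    (∀ u : ℝ, 0 < u → (deriv φ u = 0 ↔ u = um ∨ u = up)) ∧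
    (∀ᶠ x in 𝓝[≠] um, φ x < φ um) ∧
    (∀ᶠ x in 𝓝[≠] up, φ up < φ x) :=
  bessel_lommel_phi_critical_points_general α η1 um up φ hα0 hη2 hthr hum hup hφ
end
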